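/- arXiv:1511.00528 — 2 statements merged into one kernel-verified Lean document; each statement's English description precedes it below -/
import Mathlib

section
/- Let D be a dyadic lattice of a cube R₀ ⊂ ℝ^n, let μ, σ be finite Borel measures on ℝ^n, let 0 < c₁ ≤ c₂, and let E be a subset of the interior of R₀ such that every cube R ∈ D containing a point of E satisfies c₁ μ(R) ≤ σ(R) ≤ c₂ μ(R). Then for every Borel set A ⊂ ℝ^n, c₁ μ(A ∩ E) ≤ σ(A ∩ E) ≤ c₂ μ(A ∩ E). In particular σ restricted to E is absolutely continuous with respect to μ restricted to E, with Radon–Nikodym density φ satisfying c₁ ≤ φ ≤ c₂ μ-a.e. on E. -/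
open MeasureTheory Metric Set
open scoped ENNReal NNReal

noncomputable section

abbrev Rn (n : ℕ) : Type := EuclideanSpace ℝ (Fin n)

structure Cube (n : ℕ) : Type where
  c : Rn n
  l : ℝ
  l_pos : 0 < l

namespace Cube

variable {n : ℕ}

/-- The (half-open) cube as a subset of `ℝⁿ`. -/
def set (Q : Cube n) : Set (Rn n) :=
  {x | ∀ i, Q.c i - Q.l / 2 ≤ x i ∧ x i < Q.c i + Q.l / 2}

/-- The concentric dilated cube `λQ` as a set. -/
def dilatedSet (Q : Cube n) (lam : ℝ) : Set (Rn n) :=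
  {x | ∀ i, Q.c i - lam * Q.l / 2 ≤ x i ∧ x i < Q.c i + lam * Q.l / 2}

/-- The distance `d(P,R)` between two cubes. -/
def dist (P R : Cube n) : ℝ :=
  sInf (Set.image2 (fun x y => Dist.dist x y) P.set R.set)

/-- The long distance `D(P,R) = ℓ(P) + ℓ(R) + d(P,R)`. -/
def longDist (P R : Cube n) : ℝ := P.l + R.l + Cube.dist P R

end Cube

/-- The dyadic subcube of `Q₀` of generation `k`, position `j`. -/
def dyadicCube {n : ℕ} (Q₀ : Cube n) (k : ℕ) (j : Fin n → ℕ) : Cube n where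
  c := WithLp.toLp 2 (fun i => Q₀.c i - Q₀.l / 2 + ((j i : ℝ) + 1 / 2) * (Q₀.l / 2 ^ k))
  l := Q₀.l / 2 ^ k
  l_pos := by have := Q₀.l_pos; positivity

/-- The dyadic lattice generated by a cube `Q₀`: all dyadic subcubes obtained from
`Q₀` by repeated bisection. -/
def dyadicLattice {n : ℕ} (Q₀ : Cube n) : Set (Cube n) :=
  {R | ∃ (k : ℕ) (j : Fin n → ℕ), (∀ i, j i < 2 ^ k) ∧ R = dyadicCube Q₀ k j}

/-- The maximal cubes of the family `D` satisfying the property `P`: cubes of `D`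
satisfying `P` such that no strictly larger cube of `D` containing them satisfies
`P`. -/
def maxCubes {n : ℕ} (D : Set (Cube n)) (P : Cube n → Prop) : Set (Cube n) :=
  {R | R ∈ D ∧ P R ∧ ∀ R' ∈ D, R.set ⊂ R'.set → ¬ P R'}

/-! Dyadic cubes are nested or disjoint, so for an open set `U` the maximal dyadic cubes
contained in `U` and meeting `E` are pairwise disjoint; since every point of `E ∩ U` lies in
arbitrarily small dyadic cubes, they cover `E ∩ U`. Summing the hypothesis over them gives
`c₁ μ(E ∩ U) ≤ σ(U)` and `σ(E ∩ U) ≤ c₂ μ(U)`, and outer regularity of `σ` and `c₂ μ`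
replaces `U` by an arbitrary `A ∩ E`. The resulting two-sided bound
`c₁ μ⌊E ≤ σ⌊E ≤ c₂ μ⌊E` yields absolute continuity and the bounds on the density. -/

open scoped Topology

namespace Cube

variable {n : ℕ}

theorem measurableSet_set (Q : Cube n) : MeasurableSet Q.set := by
  have : Q.set = ⋂ i, (fun x : Rn n => x i) ⁻¹' Ico (Q.c i - Q.l / 2) (Q.c i + Q.l / 2) := by
    ext x; simp [Cube.set]
  rw [this]
  exact .iInter fun i => (by fun_prop : Continuous fun x : Rn n => x i).measurable measurableSet_Ico

theorem set_nonempty (Q : Cube n) : Q.set.Nonempty :=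
  ⟨Q.c, fun i => ⟨by linarith [Q.l_pos], by linarith [Q.l_pos]⟩⟩

end Cube

section Dyadic

variable {n : ℕ}

theorem mem_dyadicCube_set_iff (Q₀ : Cube n) (k : ℕ) (j : Fin n → ℕ) (x : Rn n) :
    x ∈ (dyadicCube Q₀ k j).set ↔ ∀ i,
      Q₀.c i - Q₀.l / 2 + j i * (Q₀.l / 2 ^ k) ≤ x i ∧
        x i < Q₀.c i - Q₀.l / 2 + (j i + 1) * (Q₀.l / 2 ^ k) := by
  simp only [Cube.set, dyadicCube, mem_ofPred_eq, PiLp.toLp_apply]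
  refine forall_congr' fun i => ?_
  constructor <;> rintro ⟨h1, h2⟩ <;> constructor <;> linarith

theorem exists_mem_dyadicCube_set (Q₀ : Cube n) (k : ℕ) {x : Rn n} (hx : x ∈ Q₀.set) :
    ∃ j : Fin n → ℕ, (∀ i, j i < 2 ^ k) ∧ x ∈ (dyadicCube Q₀ k j).set := by
  set h := Q₀.l / 2 ^ k
  have hh : 0 < h := by have := Q₀.l_pos; positivity
  have hl : 2 ^ k * h = Q₀.l := by simp only [h]; field_simp
  set t : Fin n → ℝ := fun i => (x i - (Q₀.c i - Q₀.l / 2)) / h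
  have ht : ∀ i, 0 ≤ t i ∧ t i < 2 ^ k := fun i => by
    rw [div_lt_iff₀ hh]
    exact ⟨div_nonneg (by linarith [(hx i).1]) hh.le, by linarith [(hx i).2]⟩
  refine ⟨fun i => ⌊t i⌋₊, fun i => (Nat.floor_lt (ht i).1).2 (by exact_mod_cast (ht i).2),
    (mem_dyadicCube_set_iff _ _ _ _).2 fun i => ⟨?_, ?_⟩⟩
  · have := Nat.floor_le (ht i).1
    rw [le_div_iff₀ hh] at this
    linarith
  · have := Nat.lt_floor_add_one (t i)
    rw [div_lt_iff₀ hh] at this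
    linarith

theorem dyadicCube_set_subset_of_le (Q₀ : Cube n) {k k' : ℕ} {j j' : Fin n → ℕ} (hk : k ≤ k')
    (hne : ((dyadicCube Q₀ k j).set ∩ (dyadicCube Q₀ k' j').set).Nonempty) :
    (dyadicCube Q₀ k' j').set ⊆ (dyadicCube Q₀ k j).set := by
  obtain ⟨x, hx, hx'⟩ := hne
  obtain ⟨m, rfl⟩ := Nat.exists_eq_add_of_le hk
  intro y hy
  rw [mem_dyadicCube_set_iff] at hx hx' hy ⊢
  set h := Q₀.l / 2 ^ (k + m)
  have hh : 0 < h := by have := Q₀.l_pos; positivity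
  have hH : Q₀.l / 2 ^ k = 2 ^ m * h := by simp only [h]; field_simp; ring
  intro i
  obtain ⟨a₁, a₂⟩ := hx i
  obtain ⟨b₁, b₂⟩ := hx' i
  rw [hH] at a₁ a₂ ⊢
  have r₁ : (j i * 2 ^ m : ℝ) < j' i + 1 := by nlinarith [a₁.trans_lt b₂]
  have r₂ : (j' i : ℝ) < (j i + 1) * 2 ^ m := by nlinarith [b₁.trans_lt a₂]
  have n₁ : j i * 2 ^ m < j' i + 1 := by exact_mod_cast r₁
  have n₂ : j' i < (j i + 1) * 2 ^ m := by exact_mod_cast r₂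
  -- overlapping intervals on nested integer grids are nested
  have s₁ : (j i * 2 ^ m : ℝ) ≤ j' i := by exact_mod_cast (by omega : j i * 2 ^ m ≤ j' i)
  have s₂ : (j' i + 1 : ℝ) ≤ (j i + 1) * 2 ^ m := by
    exact_mod_cast (by omega : j' i + 1 ≤ (j i + 1) * 2 ^ m)
  constructor <;> nlinarith [hy i]

theorem countable_dyadicLattice (Q₀ : Cube n) : (dyadicLattice Q₀).Countable :=
  (countable_range fun p : ℕ × (Fin n → ℕ) => dyadicCube Q₀ p.1 p.2).mono
    (by rintro _ ⟨k, j, -, rfl⟩; exact ⟨(k, j), rfl⟩)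

theorem dyadicLattice_subset_or_subset_or_disjoint (Q₀ : Cube n) {R R' : Cube n}
    (hR : R ∈ dyadicLattice Q₀) (hR' : R' ∈ dyadicLattice Q₀) :
    R.set ⊆ R'.set ∨ R'.set ⊆ R.set ∨ Disjoint R.set R'.set := by
  obtain ⟨k, j, -, rfl⟩ := hR
  obtain ⟨k', j', -, rfl⟩ := hR'
  by_cases hd : Disjoint (dyadicCube Q₀ k j).set (dyadicCube Q₀ k' j').set
  · exact .inr (.inr hd)
  rw [not_disjoint_iff_nonempty_inter] at hd
  rcases le_total k k' with hk | hk
  · exact .inr (.inl (dyadicCube_set_subset_of_le Q₀ hk hd))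
  · exact .inl (dyadicCube_set_subset_of_le Q₀ hk (inter_comm _ _ ▸ hd))

/-- Maximal elements exist because a dyadic cube has only finitely many dyadic ancestors:
take one of the coarsest generation. -/
theorem exists_maximal_dyadicLattice_superset (Q₀ : Cube n) (P : Set (Rn n) → Prop)
    {R : Cube n} (hR : R ∈ dyadicLattice Q₀) (hP : P R.set) :
    ∃ S, R.set ⊆ S ∧ Maximal (fun S => S ∈ Cube.set '' dyadicLattice Q₀ ∧ P S) S := by
  classical
  obtain ⟨k, j, hj, rfl⟩ := hR
  have hex : ∃ k' j', (∀ i, j' i < 2 ^ k') ∧ P (dyadicCube Q₀ k' j').set ∧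
      (dyadicCube Q₀ k j).set ⊆ (dyadicCube Q₀ k' j').set := ⟨k, j, hj, hP, subset_rfl⟩
  obtain ⟨j₀, hj₀, hP₀, hsub₀⟩ := Nat.find_spec hex
  refine ⟨_, hsub₀, ⟨⟨_, ⟨_, j₀, hj₀, rfl⟩, rfl⟩, hP₀⟩, ?_⟩
  rintro _ ⟨⟨_, ⟨k', j', hj', rfl⟩, rfl⟩, hP'⟩ hsub
  refine dyadicCube_set_subset_of_le Q₀ (Nat.find_min' hex ⟨j', hj', hP', hsub₀.trans hsub⟩) ?_
  obtain ⟨x, hx⟩ := (dyadicCube Q₀ _ j₀).set_nonempty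
  exact ⟨x, hx, hsub hx⟩

theorem exists_mem_dyadicLattice_subset (Q₀ : Cube n) {x : Rn n} (hx : x ∈ Q₀.set)
    {U : Set (Rn n)} (hU : U ∈ 𝓝 x) : ∃ R ∈ dyadicLattice Q₀, x ∈ R.set ∧ R.set ⊆ U := by
  obtain ⟨ε, hε, hball⟩ := Metric.mem_nhds_iff.1 hU
  obtain ⟨k, hk⟩ := pow_unbounded_of_one_lt (Real.sqrt n * Q₀.l / ε) one_lt_two
  set h := Q₀.l / 2 ^ k
  have hh : 0 < h := by have := Q₀.l_pos; positivity
  have hsmall : Real.sqrt n * h < ε := by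
    rw [div_lt_iff₀ hε] at hk
    rw [← mul_div_assoc, div_lt_iff₀ (by positivity)]
    linarith
  obtain ⟨j, hj, hxj⟩ := exists_mem_dyadicCube_set Q₀ k hx
  refine ⟨_, ⟨k, j, hj, rfl⟩, hxj, fun y hy => hball ?_⟩
  have hcoord : ∀ i, dist (y i) (x i) ≤ h := fun i => by
    have hyi := hy i
    have hxi := hxj i
    simp only [dyadicCube] at hyi hxi
    rw [Real.dist_eq, abs_le]
    constructor <;> linarith
  calc dist y x = Real.sqrt (∑ i, dist (y i) (x i) ^ 2) := EuclideanSpace.dist_eq y x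
    _ ≤ Real.sqrt (∑ _i : Fin n, h ^ 2) :=
        Real.sqrt_le_sqrt <| Finset.sum_le_sum fun i _ => pow_le_pow_left₀ dist_nonneg (hcoord i) 2
    _ = Real.sqrt n * h := by
        rw [Finset.sum_const, Finset.card_univ, Fintype.card_fin, nsmul_eq_mul,
          Real.sqrt_mul (by positivity), Real.sqrt_sq hh.le]
    _ < ε := hsmall

end Dyadic

theorem Set.pairwiseDisjoint_maximal_of_subset_or_disjoint {α : Type*} {𝓒 : Set (Set α)}
    (h : ∀ s ∈ 𝓒, ∀ t ∈ 𝓒, s ⊆ t ∨ t ⊆ s ∨ Disjoint s t) :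
    {s | Maximal (· ∈ 𝓒) s}.PairwiseDisjoint id := by
  intro s hs t ht hst
  rcases h s hs.prop t ht.prop with hsub | hsub | hd
  · exact absurd (hs.eq_of_subset ht.prop hsub) hst
  · exact absurd (ht.eq_of_subset hs.prop hsub).symm hst
  · exact hd

theorem MeasureTheory.measure_sUnion_le_of_forall_le {α : Type*} [MeasurableSpace α]
    {μ ν : Measure α} {𝓜 : Set (Set α)} (hc : 𝓜.Countable) (hd : 𝓜.PairwiseDisjoint id)
    (hm : ∀ s ∈ 𝓜, MeasurableSet s) (h : ∀ s ∈ 𝓜, μ s ≤ ν s) : μ (⋃₀ 𝓜) ≤ ν (⋃₀ 𝓜) := by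
  rw [measure_sUnion hc hd hm, measure_sUnion hc hd hm]
  exact ENNReal.tsum_le_tsum fun s => h s s.2

theorem MeasureTheory.Measure.ae_le_rnDeriv_and_rnDeriv_le {α : Type*} [MeasurableSpace α]
    {ν ρ : Measure α} [SigmaFinite ν] [SigmaFinite ρ] {c d : ℝ≥0∞}
    (hc : c • ρ ≤ ν) (hd : ν ≤ d • ρ) :
    ∀ᵐ x ∂ρ, c ≤ ν.rnDeriv ρ x ∧ ν.rnDeriv ρ x ≤ d := by
  have hint : ∀ s, MeasurableSet s → ∫⁻ x in s, ν.rnDeriv ρ x ∂ρ = ν s :=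
    fun s hs => setLIntegral_rnDeriv' (absolutelyContinuous_of_le_smul hd) hs
  have hlow : (fun _ => c) ≤ᵐ[ρ] ν.rnDeriv ρ :=
    ae_le_of_forall_setLIntegral_le_of_sigmaFinite measurable_const fun s hs _ => by
      rw [hint s hs, setLIntegral_const]
      exact hc s
  have hup : ν.rnDeriv ρ ≤ᵐ[ρ] fun _ => d :=
    ae_le_of_forall_setLIntegral_le_of_sigmaFinite (measurable_rnDeriv _ _) fun s hs _ => by
      rw [hint s hs, setLIntegral_const]
      exact hd s
  filter_upwards [hlow, hup] with x hxc hxd using ⟨hxc, hxd⟩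

section Comparison

variable {n : ℕ} (Q₀ : Cube n) {μ ν : Measure (Rn n)} {E : Set (Rn n)}

theorem measure_inter_isOpen_le_of_forall_dyadicLattice (hE : E ⊆ Q₀.set)
    (h : ∀ R ∈ dyadicLattice Q₀, (R.set ∩ E).Nonempty → μ R.set ≤ ν R.set)
    {U : Set (Rn n)} (hU : IsOpen U) : μ (E ∩ U) ≤ ν U := by
  set 𝓒 := {S | S ∈ Cube.set '' dyadicLattice Q₀ ∧ S ⊆ U ∧ (S ∩ E).Nonempty}
  set 𝓜 := {S | Maximal (· ∈ 𝓒) S}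
  have hcover : E ∩ U ⊆ ⋃₀ 𝓜 := by
    rintro x ⟨hxE, hxU⟩
    obtain ⟨R, hR, hxR, hRU⟩ := exists_mem_dyadicLattice_subset Q₀ (hE hxE) (hU.mem_nhds hxU)
    obtain ⟨S, hRS, hS⟩ := exists_maximal_dyadicLattice_superset Q₀
      (fun S => S ⊆ U ∧ (S ∩ E).Nonempty) hR ⟨hRU, x, hxR, hxE⟩
    exact ⟨S, hS, hRS hxR⟩
  have hdisj : 𝓜.PairwiseDisjoint id :=
    Set.pairwiseDisjoint_maximal_of_subset_or_disjoint <| by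
      rintro _ ⟨⟨R, hR, rfl⟩, -⟩ _ ⟨⟨R', hR', rfl⟩, -⟩
      exact dyadicLattice_subset_or_subset_or_disjoint Q₀ hR hR'
  have hcount : 𝓜.Countable :=
    ((countable_dyadicLattice Q₀).image _).mono fun S hS => hS.prop.1
  calc μ (E ∩ U) ≤ μ (⋃₀ 𝓜) := measure_mono hcover
    _ ≤ ν (⋃₀ 𝓜) := by
      refine measure_sUnion_le_of_forall_le hcount hdisj (fun S hS => ?_) fun S hS => ?_
      · obtain ⟨⟨R, -, rfl⟩, -⟩ := hS.prop
        exact R.measurableSet_set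
      · obtain ⟨⟨R, hR, rfl⟩, -, hRE⟩ := hS.prop
        exact h R hR hRE
    _ ≤ ν U := measure_mono (sUnion_subset fun S hS => hS.prop.2.1)

theorem measure_inter_le_of_forall_dyadicLattice [ν.OuterRegular] (hE : E ⊆ Q₀.set)
    (h : ∀ R ∈ dyadicLattice Q₀, (R.set ∩ E).Nonempty → μ R.set ≤ ν R.set)
    (A : Set (Rn n)) : μ (A ∩ E) ≤ ν (A ∩ E) := by
  rw [Set.measure_eq_iInf_isOpen (A ∩ E) ν]
  refine le_iInf₂ fun U hAU => le_iInf fun hU => ?_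
  calc μ (A ∩ E) ≤ μ (E ∩ U) := measure_mono fun x hx => ⟨hx.2, hAU hx⟩
    _ ≤ ν U := measure_inter_isOpen_le_of_forall_dyadicLattice Q₀ hE h hU

end Comparison

theorem statement8_general (n : ℕ) (c₁ c₂ : ℝ)
    (R₀ : Cube n) (μ σ : Measure (Rn n)) [IsFiniteMeasure μ] [IsFiniteMeasure σ]
    (E : Set (Rn n)) (hE : E ⊆ interior R₀.set)
    (hcomp : ∀ R ∈ dyadicLattice R₀, (Cube.set R ∩ E).Nonempty →
      ENNReal.ofReal c₁ * μ (Cube.set R) ≤ σ (Cube.set R)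
        ∧ σ (Cube.set R) ≤ ENNReal.ofReal c₂ * μ (Cube.set R)) :
    (∀ A : Set (Rn n), MeasurableSet A →
        ENNReal.ofReal c₁ * μ (A ∩ E) ≤ σ (A ∩ E)
          ∧ σ (A ∩ E) ≤ ENNReal.ofReal c₂ * μ (A ∩ E))
    ∧ σ.restrict E ≪ μ.restrict E
    ∧ ∃ φ : Rn n → ℝ≥0∞, Measurable φ
        ∧ (∀ A : Set (Rn n), MeasurableSet A →
            σ.restrict E A = ∫⁻ x in A, φ x ∂(μ.restrict E))
        ∧ (∀ᵐ x ∂(μ.restrict E),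
            ENNReal.ofReal c₁ ≤ φ x ∧ φ x ≤ ENNReal.ofReal c₂) := by
  have hE' : E ⊆ R₀.set := hE.trans interior_subset
  have := Measure.OuterRegular.smul μ (ENNReal.ofReal_ne_top (r := c₂))
  have hcompare : ∀ A, ENNReal.ofReal c₁ * μ (A ∩ E) ≤ σ (A ∩ E)
      ∧ σ (A ∩ E) ≤ ENNReal.ofReal c₂ * μ (A ∩ E) := fun A =>
    ⟨measure_inter_le_of_forall_dyadicLattice R₀ (μ := ENNReal.ofReal c₁ • μ) hE'
        (fun R hR hRE => (hcomp R hR hRE).1) A,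
      measure_inter_le_of_forall_dyadicLattice R₀ (ν := ENNReal.ofReal c₂ • μ) hE'
        (fun R hR hRE => (hcomp R hR hRE).2) A⟩
  have h₁ : ENNReal.ofReal c₁ • μ.restrict E ≤ σ.restrict E := Measure.le_iff.2 fun s hs => by
    simpa [Measure.restrict_apply hs] using (hcompare s).1
  have h₂ : σ.restrict E ≤ ENNReal.ofReal c₂ • μ.restrict E := Measure.le_iff.2 fun s hs => by
    simpa [Measure.restrict_apply hs] using (hcompare s).2
  have hac := Measure.absolutelyContinuous_of_le_smul h₂
  have := Measure.haveLebesgueDecomposition_of_sigmaFinite (σ.restrict E) (μ.restrict E)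
  exact ⟨fun A _ => hcompare A, hac, _, Measure.measurable_rnDeriv _ _,
    fun A hA => (Measure.setLIntegral_rnDeriv' hac hA).symm,
    Measure.ae_le_rnDeriv_and_rnDeriv_le h₁ h₂⟩

/-- Let `D` be the dyadic lattice of `R₀`, `μ, σ` finite Borel
measures, `0 < c₁ ≤ c₂`, and `E` a (Borel) subset of the interior of `R₀` such that
every cube `R ∈ D` containing a point of `E` satisfies `c₁ μ(R) ≤ σ(R) ≤ c₂ μ(R)`.
Then for every Borel set `A`: `c₁ μ(A ∩ E) ≤ σ(A ∩ E) ≤ c₂ μ(A ∩ E)`.  In particular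
`σ⌊E ≪ μ⌊E`, with a Radon–Nikodym density `φ` satisfying `c₁ ≤ φ ≤ c₂` μ-a.e. on
`E`. -/
theorem statement8 (n : ℕ) (c₁ c₂ : ℝ) (hc₁ : 0 < c₁) (hc : c₁ ≤ c₂)
    (R₀ : Cube n) (μ σ : Measure (Rn n)) [IsFiniteMeasure μ] [IsFiniteMeasure σ]
    (E : Set (Rn n)) (hE_meas : MeasurableSet E) (hE : E ⊆ interior R₀.set)
    (hcomp : ∀ R ∈ dyadicLattice R₀, (Cube.set R ∩ E).Nonempty →
      ENNReal.ofReal c₁ * μ (Cube.set R) ≤ σ (Cube.set R)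
        ∧ σ (Cube.set R) ≤ ENNReal.ofReal c₂ * μ (Cube.set R)) :
    (∀ A : Set (Rn n), MeasurableSet A →
        ENNReal.ofReal c₁ * μ (A ∩ E) ≤ σ (A ∩ E)
          ∧ σ (A ∩ E) ≤ ENNReal.ofReal c₂ * μ (A ∩ E))
    ∧ σ.restrict E ≪ μ.restrict E
    ∧ ∃ φ : Rn n → ℝ≥0∞, Measurable φ
        ∧ (∀ A : Set (Rn n), MeasurableSet A →
            σ.restrict E A = ∫⁻ x in A, φ x ∂(μ.restrict E))
        ∧ (∀ᵐ x ∂(μ.restrict E),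
            ENNReal.ofReal c₁ ≤ φ x ∧ φ x ≤ ENNReal.ofReal c₂) :=
  statement8_general n c₁ c₂ R₀ μ σ E hE hcomp

end
end

section
/- Let (s_t)_{t>0} be kernels satisfying the size and y-Hölder conditions with exponents m, α > 0. Let σ be a finite Borel measure on ℝ^n, let P, R be cubes with ℓ(P) ≤ ℓ(R)/2, and let g ∈ L²(σ) with supp g ⊂ P and ∫ g dσ = 0. Then for every x ∈ R and every t ∈ [ℓ(R)/2, ℓ(R)): |θ_t^σ g(x)| ≤ C ℓ(P)^{α/2} ℓ(R)^{α/2} D(P,R)^{−(m+α)} σ(P)^{1/2} ‖g‖_{L²(σ)}, where D(P,R) = ℓ(P) + ℓ(R) + d(P,R) and C depends only on n, m, α and the kernel constants. -/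
open MeasureTheory Metric Set
open scoped ENNReal NNReal

noncomputable section

/-- Size condition for the kernels `s_t`. -/
def SizeCond (n : ℕ) (m α Cs : ℝ) (s : ℝ → Rn n → Rn n → ℂ) : Prop :=
  ∀ t : ℝ, 0 < t → ∀ x y : Rn n,
    ‖s t x y‖ ≤ Cs * t ^ α / (t + Dist.dist x y) ^ (m + α)

/-- Hölder condition in the `y`-variable. -/
def HolderY (n : ℕ) (m α Cs : ℝ) (s : ℝ → Rn n → Rn n → ℂ) : Prop :=
  ∀ t : ℝ, 0 < t → ∀ x y z : Rn n, Dist.dist y z < t / 2 →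
    ‖s t x y - s t x z‖ ≤ Cs * Dist.dist y z ^ α / (t + Dist.dist x y) ^ (m + α)

/-- Hölder condition in the `x`-variable. -/
def HolderX (n : ℕ) (m α Cs : ℝ) (s : ℝ → Rn n → Rn n → ℂ) : Prop :=
  ∀ t : ℝ, 0 < t → ∀ x y z : Rn n, Dist.dist x z < t / 2 →
    ‖s t x y - s t z y‖ ≤ Cs * Dist.dist x z ^ α / (t + Dist.dist x y) ^ (m + α)

/-- `θ_t(g dσ)(x) = ∫ s_t(x,y) g(y) dσ(y)`. -/
def theta {n : ℕ} (s : ℝ → Rn n → Rn n → ℂ) (σ : Measure (Rn n)) (g : Rn n → ℂ)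
    (t : ℝ) (x : Rn n) : ℂ :=
  ∫ y, s t x y * g y ∂σ

/-- `∫_I |θ_t(g dσ)(x)|² dt/t`, the square of the vertical square function with
`t` restricted to `I` (the full square function corresponds to `I = (0,∞)`, the
truncation `V_Q` to `I = (0, ℓ(Q))`). -/
def sqV {n : ℕ} (s : ℝ → Rn n → Rn n → ℂ) (σ : Measure (Rn n)) (g : Rn n → ℂ)
    (I : Set ℝ) (x : Rn n) : ℝ≥0∞ :=
  ∫⁻ t in I, (‖theta s σ g t x‖₊ : ℝ≥0∞) ^ 2 / ENNReal.ofReal t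

/-!
Since `∫ g dσ = 0`, one may subtract the constant `s_t(x, c_P)` from the kernel. For `y ∈ P`
either `|y - c_P| < t/2`, and the Hölder condition bounds the difference by `|y - c_P|^α`, or
`t ≤ 2|y - c_P| ≲ ℓ(P)`, and the size condition bounds each term by `t^α`; in both cases the
numerator is at most `min(ℓ(P), ℓ(R))^α ≤ ℓ(P)^{α/2} ℓ(R)^{α/2}` up to a dimensional factor,
while `t + |x - y| ≥ D(P,R)/3`. Cauchy–Schwarz on `P` turns `∫ |g| dσ` into
`σ(P)^{1/2} ‖g‖_{L²(σ)}`.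
-/

namespace Cube

variable {n : ℕ}

lemma center_mem (Q : Cube n) : Q.c ∈ Q.set :=
  fun _ => ⟨by linarith [Q.l_pos], by linarith [Q.l_pos]⟩

lemma dist_center_le {Q : Cube n} {y : Rn n} (hy : y ∈ Q.set) :
    Dist.dist y Q.c ≤ √n * Q.l / 2 := by
  have hcoord : ∀ i, Dist.dist (y i) (Q.c i) ^ 2 ≤ (Q.l / 2) ^ 2 := fun i => by
    rw [Real.dist_eq, sq_abs]
    nlinarith [hy i, Q.l_pos]
  calc Dist.dist y Q.c = √(∑ i, Dist.dist (y i) (Q.c i) ^ 2) := EuclideanSpace.dist_eq _ _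
    _ ≤ √(∑ _i : Fin n, (Q.l / 2) ^ 2) :=
      Real.sqrt_le_sqrt (Finset.sum_le_sum fun i _ => hcoord i)
    _ = √n * Q.l / 2 := by
      rw [Finset.sum_const, Finset.card_univ, Fintype.card_fin, nsmul_eq_mul,
        Real.sqrt_mul n.cast_nonneg, Real.sqrt_sq (by linarith [Q.l_pos])]
      ring

lemma dist_le_dist_of_mem {P R : Cube n} {x y : Rn n} (hy : y ∈ P.set) (hx : x ∈ R.set) :
    Cube.dist P R ≤ Dist.dist x y := by
  rw [dist_comm]
  exact csInf_le ⟨0, by rintro _ ⟨_, _, _, _, rfl⟩; exact _root_.dist_nonneg⟩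
    (mem_image2_of_mem hy hx)

lemma dist_nonneg (P R : Cube n) : 0 ≤ Cube.dist P R :=
  le_csInf ⟨_, mem_image2_of_mem P.center_mem R.center_mem⟩
    fun _ ⟨_, _, _, _, h⟩ => h ▸ _root_.dist_nonneg

lemma longDist_pos (P R : Cube n) : 0 < P.longDist R := by
  unfold longDist; linarith [P.l_pos, R.l_pos, dist_nonneg P R]

lemma longDist_le_three_mul {P R : Cube n} (hPR : P.l ≤ R.l / 2) {x y : Rn n}
    (hx : x ∈ R.set) (hy : y ∈ P.set) {t : ℝ} (ht : R.l / 2 ≤ t) :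
    P.longDist R ≤ 3 * (t + Dist.dist x y) := by
  unfold longDist; linarith [dist_le_dist_of_mem hy hx, _root_.dist_nonneg (x := x) (y := y)]

end Cube

lemma Real.rpow_le_rpow_half_mul_rpow_half {a b c e : ℝ} (ha : 0 ≤ a) (he : 0 < e)
    (hab : a ≤ b) (hac : a ≤ c) : a ^ e ≤ b ^ (e / 2) * c ^ (e / 2) := by
  rcases ha.eq_or_lt with rfl | ha
  · rw [Real.zero_rpow he.ne']
    positivity
  calc a ^ e = a ^ (e / 2) * a ^ (e / 2) := by rw [← Real.rpow_add ha]; ring_nf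
    _ ≤ b ^ (e / 2) * c ^ (e / 2) :=
      mul_le_mul (by gcongr) (by gcongr) (by positivity) (Real.rpow_nonneg (ha.le.trans hab) _)

lemma integral_norm_le_sqrt_measure_mul_sqrt {X E : Type*} [MeasurableSpace X]
    [NormedAddCommGroup E] {μ : Measure X} {S : Set X} (hμS : μ S ≠ ∞)
    {g : X → E} (hg : MemLp g 2 μ) (hsupp : Function.support g ⊆ S) :
    ∫ y, ‖g y‖ ∂μ ≤ √(μ S).toReal * √(∫ y, ‖g y‖ ^ 2 ∂μ) := by
  have hvanish : ∀ y ∉ S, ‖g y‖ = 0 := fun y hy =>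
    norm_eq_zero.2 (Function.notMem_support.1 fun h => hy (hsupp h))
  have : IsFiniteMeasure (μ.restrict S) := isFiniteMeasure_restrict.2 hμS
  have hCS := integral_mul_le_Lp_mul_Lq_of_nonneg (μ := μ.restrict S) .two_two
    (f := fun _ => (1 : ℝ)) (g := fun y => ‖g y‖) (ae_of_all _ fun _ => zero_le_one)
    (ae_of_all _ fun _ => norm_nonneg _)
    (by simpa using memLp_const (μ := μ.restrict S) (p := 2) (1 : ℝ))
    (by simpa using hg.norm.restrict S)
  simp only [one_mul, one_pow, Real.rpow_two, integral_const, smul_eq_mul, mul_one,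
    Measure.real, Measure.restrict_apply_univ] at hCS
  rw [setIntegral_eq_integral_of_forall_compl_eq_zero hvanish,
    setIntegral_eq_integral_of_forall_compl_eq_zero fun y hy => by simp [hvanish y hy]] at hCS
  simpa only [Real.sqrt_eq_rpow] using hCS

lemma norm_integral_mul_le_of_integral_eq_zero {X 𝕜 : Type*} [MeasurableSpace X] [RCLike 𝕜]
    {μ : Measure X} {k g : X → 𝕜} (hkg : Integrable (fun y => k y * g y) μ) (hg : Integrable g μ)
    (hg0 : ∫ y, g y ∂μ = 0) (a : 𝕜) {B : ℝ} (hk : ∀ y ∈ Function.support g, ‖k y - a‖ ≤ B) :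
    ‖∫ y, k y * g y ∂μ‖ ≤ B * ∫ y, ‖g y‖ ∂μ := by
  have hcancel : ∫ y, k y * g y ∂μ = ∫ y, (k y - a) * g y ∂μ := by
    simp only [sub_mul]
    rw [integral_sub hkg (hg.const_mul a), integral_const_mul, hg0, mul_zero, sub_zero]
  have hpointwise : ∀ y, ‖(k y - a) * g y‖ ≤ B * ‖g y‖ := fun y => by
    by_cases hy : g y = 0
    · simp [hy]
    · rw [norm_mul]
      exact mul_le_mul_of_nonneg_right (hk y hy) (norm_nonneg _)
  rw [hcancel, ← integral_const_mul]
  exact norm_integral_le_of_norm_le (hg.norm.const_mul B) (ae_of_all _ hpointwise)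

section Kernel

variable {n : ℕ} {m α Cs : ℝ} {s : ℝ → Rn n → Rn n → ℂ}

lemma SizeCond.const_nonneg (hs : SizeCond n m α Cs s) : 0 ≤ Cs := by
  simpa using (norm_nonneg _).trans (hs 1 one_pos 0 0)

lemma SizeCond.integrable_mul (hs : SizeCond n m α Cs s)
    (hmeas : Measurable fun p : ℝ × Rn n × Rn n => s p.1 p.2.1 p.2.2) (hE : 0 ≤ m + α)
    {t : ℝ} (ht : 0 < t) (x : Rn n) {σ : Measure (Rn n)} {g : Rn n → ℂ} (hg : Integrable g σ) :
    Integrable (fun y => s t x y * g y) σ := by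
  refine hg.bdd_mul (c := Cs * t ^ α / t ^ (m + α))
    (hmeas.comp (by fun_prop : Measurable fun y : Rn n => (t, x, y))).aestronglyMeasurable
    (ae_of_all _ fun y => (hs t ht x y).trans ?_)
  have := hs.const_nonneg
  gcongr
  exact le_add_of_nonneg_right dist_nonneg

lemma norm_sub_le_of_sizeCond_holderY (hs : SizeCond n m α Cs s) (hh : HolderY n m α Cs s)
    (hα : 0 < α) (hE : 0 ≤ m + α) {t ρ L K : ℝ} (ht : 0 < t) (htL : t ≤ L) {x y z : Rn n}
    (hyz : Dist.dist y z ≤ ρ / 2) (hK : 0 < K) (hKy : K ≤ t + Dist.dist x y)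
    (hKz : K ≤ t + Dist.dist x z) :
    ‖s t x y - s t x z‖ ≤ 2 * (Cs * (ρ ^ (α / 2) * L ^ (α / 2)) / K ^ (m + α)) := by
  have hCs := hs.const_nonneg
  have hρ : 0 ≤ ρ := by linarith [dist_nonneg (x := y) (y := z)]
  have hnum : 0 ≤ Cs * (ρ ^ (α / 2) * L ^ (α / 2)) :=
    mul_nonneg hCs (mul_nonneg (Real.rpow_nonneg hρ _) (Real.rpow_nonneg (ht.le.trans htL) _))
  have hbound : ∀ {r : ℝ} {w : Rn n}, 0 ≤ r → r ≤ ρ → r ≤ L → K ≤ t + Dist.dist x w →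
      Cs * r ^ α / (t + Dist.dist x w) ^ (m + α) ≤ Cs * (ρ ^ (α / 2) * L ^ (α / 2)) / K ^ (m + α) :=
    fun hr hrρ hrL hKw => by
      have := Real.rpow_le_rpow_half_mul_rpow_half hr hα hrρ hrL
      gcongr
  rcases lt_or_ge (Dist.dist y z) (t / 2) with hnear | hfar
  · calc ‖s t x y - s t x z‖ ≤ Cs * Dist.dist y z ^ α / (t + Dist.dist x y) ^ (m + α) :=
          hh t ht x y z hnear
      _ ≤ Cs * (ρ ^ (α / 2) * L ^ (α / 2)) / K ^ (m + α) :=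
          hbound dist_nonneg (by linarith) (by linarith) hKy
      _ ≤ _ := le_mul_of_one_le_left (by positivity) one_le_two
  · -- here `t ≤ 2 |y - z| ≤ ρ`, so the size condition alone is small enough
    have htρ : t ≤ ρ := by linarith
    calc ‖s t x y - s t x z‖ ≤ ‖s t x y‖ + ‖s t x z‖ := norm_sub_le _ _
      _ ≤ Cs * t ^ α / (t + Dist.dist x y) ^ (m + α)
            + Cs * t ^ α / (t + Dist.dist x z) ^ (m + α) :=
          add_le_add (hs t ht x y) (hs t ht x z)
      _ ≤ 2 * (Cs * (ρ ^ (α / 2) * L ^ (α / 2)) / K ^ (m + α)) := by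
          rw [two_mul]
          exact add_le_add (hbound ht.le htρ htL hKy) (hbound ht.le htρ htL hKz)

lemma norm_sub_center_le_of_sizeCond_holderY (hs : SizeCond n m α Cs s)
    (hh : HolderY n m α Cs s) (hα : 0 < α) (hE : 0 ≤ m + α) {P R : Cube n}
    (hPR : P.l ≤ R.l / 2) {x y : Rn n} (hx : x ∈ R.set) (hy : y ∈ P.set) {t : ℝ}
    (ht : R.l / 2 ≤ t) (htR : t < R.l) :
    ‖s t x y - s t x P.c‖ ≤ 2 * Cs * (√n + 1) ^ (α / 2) * 3 ^ (m + α) *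
      (P.l ^ (α / 2) * R.l ^ (α / 2) / P.longDist R ^ (m + α)) := by
  have hD := P.longDist_pos R
  have hyc : Dist.dist y P.c ≤ (√n + 1) * P.l / 2 := by
    linarith [Cube.dist_center_le hy, P.l_pos]
  calc ‖s t x y - s t x P.c‖
      ≤ 2 * (Cs * (((√n + 1) * P.l) ^ (α / 2) * R.l ^ (α / 2))
          / (P.longDist R / 3) ^ (m + α)) :=
        norm_sub_le_of_sizeCond_holderY hs hh hα hE (by linarith [R.l_pos]) htR.le hyc
          (by positivity) (by linarith [Cube.longDist_le_three_mul hPR hx hy ht])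
          (by linarith [Cube.longDist_le_three_mul hPR hx P.center_mem ht])
    _ = _ := by
      rw [Real.mul_rpow (by positivity) P.l_pos.le, Real.div_rpow hD.le (by norm_num)]
      field_simp

end Kernel

/-- If the kernels satisfy the size and `y`-Hölder conditions,
`P, R` are cubes with `ℓ(P) ≤ ℓ(R)/2`, and `g ∈ L²(σ)` is supported in `P` with
`∫ g dσ = 0`, then for `x ∈ R` and `t ∈ [ℓ(R)/2, ℓ(R))`,
`|θ_t^σ g(x)| ≤ C ℓ(P)^{α/2} ℓ(R)^{α/2} D(P,R)^{-(m+α)} σ(P)^{1/2} ‖g‖_{L²(σ)}`,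
where `C` depends only on `n, m, α` and the kernel constants. -/
theorem statement13 (n : ℕ) (m α Cs : ℝ) (hm : 0 < m) (hα : 0 < α) (hCs : 0 < Cs) :
    ∃ C : ℝ, 0 < C ∧
      ∀ sk : ℝ → Rn n → Rn n → ℂ,
        Measurable (fun p : ℝ × Rn n × Rn n => sk p.1 p.2.1 p.2.2) →
        SizeCond n m α Cs sk → HolderY n m α Cs sk →
      ∀ (σ : Measure (Rn n)) [IsFiniteMeasure σ] (P R : Cube n), P.l ≤ R.l / 2 →
      ∀ g : Rn n → ℂ, Measurable g → MemLp g 2 σ → Function.support g ⊆ P.set →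
        (∫ y, g y ∂σ) = 0 →
      ∀ x ∈ R.set, ∀ t : ℝ, R.l / 2 ≤ t → t < R.l →
        ‖theta sk σ g t x‖
          ≤ C * (P.l ^ (α / 2) * R.l ^ (α / 2) / Cube.longDist P R ^ (m + α))
              * Real.sqrt (σ P.set).toReal * Real.sqrt (∫ y, ‖g y‖ ^ 2 ∂σ) := by
  refine ⟨2 * Cs * (√n + 1) ^ (α / 2) * 3 ^ (m + α), by positivity, ?_⟩
  intro sk hmeas hsize hhol σ _ P R hPR g _ hg hsupp hg0 x hx t ht htR
  have hE : 0 ≤ m + α := by linarith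
  have hg1 : Integrable g σ := hg.integrable one_le_two
  have hB : 0 ≤ 2 * Cs * (√n + 1) ^ (α / 2) * 3 ^ (m + α) *
      (P.l ^ (α / 2) * R.l ^ (α / 2) / P.longDist R ^ (m + α)) := by
    have := P.longDist_pos R
    have := P.l_pos
    have := R.l_pos
    positivity
  calc ‖theta sk σ g t x‖
      ≤ 2 * Cs * (√n + 1) ^ (α / 2) * 3 ^ (m + α) *
          (P.l ^ (α / 2) * R.l ^ (α / 2) / P.longDist R ^ (m + α)) * ∫ y, ‖g y‖ ∂σ :=
        norm_integral_mul_le_of_integral_eq_zero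
          (hsize.integrable_mul hmeas hE (by linarith [R.l_pos]) x hg1) hg1 hg0 (sk t x P.c)
          fun y hy =>
            norm_sub_center_le_of_sizeCond_holderY hsize hhol hα hE hPR hx (hsupp hy) ht htR
    _ ≤ _ := by
      rw [mul_assoc _ (Real.sqrt _)]
      exact mul_le_mul_of_nonneg_left
        (integral_norm_le_sqrt_measure_mul_sqrt (measure_ne_top σ _) hg hsupp) hB

end
end
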